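/- arXiv:1006.5386 — 2 statements merged into one kernel-verified Lean document; each statement's English description precedes it below -/
import Mathlib

section
/- Let V = ℝ⁷ with standard G₂ 3-form φ₀ and Hodge star *₇. Define the linear subspaces Λ²₇ = {β ∈ Λ²(V*) : 2·*₇β = β ∧ φ₀} and Λ²₁₄ = {β ∈ Λ²(V*) : *₇β = −β ∧ φ₀}. Then Λ²(V*) = Λ²₇ ⊕ Λ²₁₄ as a direct sum of vector spaces. -/
namespace CK

/-- Model of the exterior algebra of ℝⁿ w.r.t. the standard orthonormal basis:
an element is given by its coefficients on the basis monomials `e_S` (increasing products). -/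
abbrev Form (n : ℕ) := Finset (Fin n) → ℝ

/-- The basis monomial `e^{i₁} ∧ ⋯ ∧ e^{i_k}` for `S = {i₁ < ⋯ < i_k}`. -/
def eS {n : ℕ} (S : Finset (Fin n)) : Form n := fun U => if U = S then 1 else 0

/-- The sign obtained when merging the increasing products over `S` and `T` into one. -/
def msign {n : ℕ} (S T : Finset (Fin n)) : ℝ :=
  (-1 : ℝ) ^ (((S ×ˢ T).filter fun p => p.2 < p.1).card)

/-- The wedge product. -/
def wedge {n : ℕ} (a b : Form n) : Form n :=
  fun U => ∑ S ∈ U.powerset, msign S (U \ S) * a S * b (U \ S)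

/-- The Hodge star operator for the standard metric and orientation. -/
def hstar {n : ℕ} (a : Form n) : Form n := fun U => msign Uᶜ U * a Uᶜ

/-- Interior product with the k-th standard basis vector. -/
def contr {n : ℕ} (k : Fin n) (a : Form n) : Form n :=
  fun U => if k ∈ U then 0
    else (-1 : ℝ) ^ ((U.filter fun s => s < k).card) * a (insert k U)

/-- Interior product with a general vector `X`. -/
def iVec {n : ℕ} (X : Fin n → ℝ) (a : Form n) : Form n := ∑ k, X k • contr k a

/-- The covector (1-form) dual to a vector `X`. -/
def flat {n : ℕ} (X : Fin n → ℝ) : Form n := ∑ k, X k • eS {k}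

/-- The induced inner product on forms (the basis monomials are orthonormal). -/
def formInner {n : ℕ} (a b : Form n) : ℝ := ∑ S : Finset (Fin n), a S * b S

/-- `a` is homogeneous of degree `p`, i.e. `a ∈ Λᵖ`. -/
def isDeg {n : ℕ} (p : ℕ) (a : Form n) : Prop :=
  ∀ S : Finset (Fin n), S.card ≠ p → a S = 0

/-- The standard `G₂` 3-form `φ₀` on ℝ⁷; the index `i-1 : Fin 7` corresponds to `eⁱ`. -/
def phi : Form 7 :=
  eS {0,1,2} + eS {0,3,4} + eS {0,5,6} + eS {1,3,5} - eS {1,4,6} - eS {2,3,6} - eS {2,4,5}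

/-- The standard `Spin₇` 4-form `ψ₀` on ℝ⁸; the index `i : Fin 8` corresponds to `eⁱ`. -/
def psi : Form 8 :=
  eS {0,1,2,3} + eS {0,1,4,5} + eS {0,1,6,7} + eS {0,2,4,6} - eS {0,2,5,7}
  - eS {0,3,4,7} - eS {0,3,5,6} + eS {4,5,6,7} + eS {2,3,6,7} + eS {2,3,4,5}
  + eS {1,3,5,7} - eS {1,3,4,6} - eS {1,2,5,6} - eS {1,2,4,7}

/-- `α₀ = i_{e₀}ψ₀ ∧ e¹ − i_{e₁}ψ₀ ∧ e⁰`. -/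
def alpha0 : Form 8 := wedge (contr 0 psi) (eS {1}) - wedge (contr 1 psi) (eS {0})

/-- `p(β)(X,Y) = ⟨ψ₀, i_Xβ ∧ Y♭⟩ − ⟨ψ₀, i_Yβ ∧ X♭⟩`. -/
def pval (β : Form 8) (X Y : Fin 8 → ℝ) : ℝ :=
  formInner psi (wedge (iVec X β) (flat Y)) - formInner psi (wedge (iVec Y β) (flat X))

/-- The k-th standard basis vector. -/
def bvec {n : ℕ} (k : Fin n) : Fin n → ℝ := fun j => if j = k then 1 else 0

/-- The 2-form `p(β)` regarded as an element of our model (its coefficient on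
`e^k ∧ e^l`, `k < l`, is `p(β)(e_k, e_l)`). -/
def pform (β : Form 8) : Form 8 := fun U =>
  if hU : U.Nonempty then
    (if U.card = 2 then pval β (bvec (U.min' hU)) (bvec (U.max' hU)) else 0)
  else 0

lemma wedge_add_left {n : ℕ} (a b c : Form n) :
    wedge (a + b) c = wedge a c + wedge b c := by
  funext U
  simp only [wedge, Pi.add_apply, ← Finset.sum_add_distrib]
  exact Finset.sum_congr rfl fun S _ => by ring

lemma wedge_add_right {n : ℕ} (a b c : Form n) :
    wedge a (b + c) = wedge a b + wedge a c := by
  funext U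
  simp only [wedge, Pi.add_apply, ← Finset.sum_add_distrib]
  exact Finset.sum_congr rfl fun S _ => by ring

lemma wedge_smul_left {n : ℕ} (r : ℝ) (a c : Form n) :
    wedge (r • a) c = r • wedge a c := by
  funext U
  simp only [wedge, Pi.smul_apply, smul_eq_mul, Finset.mul_sum]
  exact Finset.sum_congr rfl fun S _ => by ring

lemma wedge_smul_right {n : ℕ} (r : ℝ) (a c : Form n) :
    wedge a (r • c) = r • wedge a c := by
  funext U
  simp only [wedge, Pi.smul_apply, smul_eq_mul, Finset.mul_sum]
  exact Finset.sum_congr rfl fun S _ => by ring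

lemma wedge_zero_left {n : ℕ} (c : Form n) : wedge 0 c = 0 := by
  funext U; simp [wedge]

lemma wedge_zero_right {n : ℕ} (c : Form n) : wedge c 0 = 0 := by
  funext U; simp [wedge]

lemma hstar_add {n : ℕ} (a b : Form n) : hstar (a + b) = hstar a + hstar b := by
  funext U; simp [hstar, mul_add]

lemma hstar_smul {n : ℕ} (r : ℝ) (a : Form n) : hstar (r • a) = r • hstar a := by
  funext U; simp [hstar]; ring

lemma hstar_zero {n : ℕ} : hstar (0 : Form n) = 0 := by
  funext U; simp [hstar]

/-- The subspace `Λᵖ` of degree-`p` forms. -/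
def degSub (n p : ℕ) : Submodule ℝ (Form n) where
  carrier := {a | isDeg p a}
  add_mem' := fun {a b} ha hb S hS => by
    simp only [Pi.add_apply, ha S hS, hb S hS, add_zero]
  zero_mem' := fun S _ => rfl
  smul_mem' := fun c a ha S hS => by
    simp only [Pi.smul_apply, ha S hS, smul_zero]

/-- `Λ²₇ = {β ∈ Λ²(ℝ⁷)* : β ∧ φ₀ = 2 *₇β}`. -/
def L27 : Submodule ℝ (Form 7) where
  carrier := {a | isDeg 2 a ∧ wedge a phi = (2 : ℝ) • hstar a}
  add_mem' := by
    rintro a b ⟨ha1, ha2⟩ ⟨hb1, hb2⟩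
    refine ⟨fun S hS => by simp only [Pi.add_apply, ha1 S hS, hb1 S hS, add_zero], ?_⟩
    rw [wedge_add_left, hstar_add, smul_add, ha2, hb2]
  zero_mem' := ⟨fun S _ => rfl, by rw [wedge_zero_left, hstar_zero, smul_zero]⟩
  smul_mem' := by
    rintro c a ⟨ha1, ha2⟩
    refine ⟨fun S hS => by simp only [Pi.smul_apply, ha1 S hS, smul_zero], ?_⟩
    rw [wedge_smul_left, hstar_smul, ha2, smul_comm]

/-- `Λ²₁₄ = {β ∈ Λ²(ℝ⁷)* : β ∧ φ₀ = −*₇β}`. -/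
def L214 : Submodule ℝ (Form 7) where
  carrier := {a | isDeg 2 a ∧ wedge a phi = -hstar a}
  add_mem' := by
    rintro a b ⟨ha1, ha2⟩ ⟨hb1, hb2⟩
    refine ⟨fun S hS => by simp only [Pi.add_apply, ha1 S hS, hb1 S hS, add_zero], ?_⟩
    rw [wedge_add_left, hstar_add, ha2, hb2, neg_add]
  zero_mem' := ⟨fun S _ => rfl, by rw [wedge_zero_left, hstar_zero, neg_zero]⟩
  smul_mem' := by
    rintro c a ⟨ha1, ha2⟩
    refine ⟨fun S hS => by simp only [Pi.smul_apply, ha1 S hS, smul_zero], ?_⟩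
    rw [wedge_smul_left, hstar_smul, ha2, smul_neg]

/-- `Λ³₈ = {*₈(ψ₀ ∧ α) : α ∈ (ℝ⁸)*}`. -/
def L38 : Submodule ℝ (Form 8) where
  carrier := {b | ∃ α : Form 8, isDeg 1 α ∧ b = hstar (wedge psi α)}
  add_mem' := by
    rintro a b ⟨x, hx1, rfl⟩ ⟨y, hy1, rfl⟩
    exact ⟨x + y, fun S hS => by simp only [Pi.add_apply, hx1 S hS, hy1 S hS, add_zero],
      by rw [wedge_add_right, hstar_add]⟩
  zero_mem' := ⟨0, fun S _ => rfl, by rw [wedge_zero_right, hstar_zero]⟩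
  smul_mem' := by
    rintro c a ⟨x, hx1, rfl⟩
    exact ⟨c • x, fun S hS => by simp only [Pi.smul_apply, hx1 S hS, smul_zero],
      by rw [wedge_smul_right, hstar_smul]⟩

/-- `Λ³₄₈ = {β ∈ Λ³(ℝ⁸)* : β ∧ ψ₀ = 0}`. -/
def L348 : Submodule ℝ (Form 8) where
  carrier := {b | isDeg 3 b ∧ wedge b psi = 0}
  add_mem' := by
    rintro a b ⟨ha1, ha2⟩ ⟨hb1, hb2⟩
    refine ⟨fun S hS => by simp only [Pi.add_apply, ha1 S hS, hb1 S hS, add_zero], ?_⟩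
    rw [wedge_add_left, ha2, hb2, add_zero]
  zero_mem' := ⟨fun S _ => rfl, wedge_zero_left _⟩
  smul_mem' := by
    rintro c a ⟨ha1, ha2⟩
    refine ⟨fun S hS => by simp only [Pi.smul_apply, ha1 S hS, smul_zero], ?_⟩
    rw [wedge_smul_left, ha2, smul_zero]


set_option maxRecDepth 40000

-- integer layer
abbrev FormZ (n : ℕ) := Finset (Fin n) → ℤ
def eSZ {n : ℕ} (S : Finset (Fin n)) : FormZ n := fun U => if U = S then 1 else 0
def msignZ {n : ℕ} (S T : Finset (Fin n)) : ℤ :=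
  (-1 : ℤ) ^ (((S ×ˢ T).filter fun p => p.2 < p.1).card)
def wedgeZ {n : ℕ} (a b : FormZ n) : FormZ n :=
  fun U => ∑ S ∈ U.powerset, msignZ S (U \ S) * a S * b (U \ S)
def hstarZ {n : ℕ} (a : FormZ n) : FormZ n := fun U => msignZ Uᶜ U * a Uᶜ
def phiZ : FormZ 7 :=
  eSZ {0,1,2} + eSZ {0,3,4} + eSZ {0,5,6} + eSZ {1,3,5} - eSZ {1,4,6} - eSZ {2,3,6} - eSZ {2,4,5}
def TZ (a : FormZ 7) : FormZ 7 := hstarZ (wedgeZ a phiZ)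
def tbl : Finset (Fin 7) → FormZ 7 := fun S U => if S = ({0,1}:Finset (Fin 7)) then (if U = ({3,6}:Finset (Fin 7)) then -1 else if U = ({4,5}:Finset (Fin 7)) then -1 else 0) else if S = ({0,2}:Finset (Fin 7)) then (if U = ({3,5}:Finset (Fin 7)) then -1 else if U = ({4,6}:Finset (Fin 7)) then 1 else 0) else if S = ({0,3}:Finset (Fin 7)) then (if U = ({1,6}:Finset (Fin 7)) then 1 else if U = ({2,5}:Finset (Fin 7)) then 1 else 0) else if S = ({0,4}:Finset (Fin 7)) then (if U = ({1,5}:Finset (Fin 7)) then 1 else if U = ({2,6}:Finset (Fin 7)) then -1 else 0) else if S = ({0,5}:Finset (Fin 7)) then (if U = ({1,4}:Finset (Fin 7)) then -1 else if U = ({2,3}:Finset (Fin 7)) then -1 else 0) else if S = ({0,6}:Finset (Fin 7)) then (if U = ({1,3}:Finset (Fin 7)) then -1 else if U = ({2,4}:Finset (Fin 7)) then 1 else 0) else if S = ({1,2}:Finset (Fin 7)) then (if U = ({3,4}:Finset (Fin 7)) then 1 else if U = ({5,6}:Finset (Fin 7)) then 1 else 0) else if S = ({1,3}:Finset (Fin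 7)) then (if U = ({0,6}:Finset (Fin 7)) then -1 else if U = ({2,4}:Finset (Fin 7)) then -1 else 0) else if S = ({1,4}:Finset (Fin 7)) then (if U = ({0,5}:Finset (Fin 7)) then -1 else if U = ({2,3}:Finset (Fin 7)) then 1 else 0) else if S = ({1,5}:Finset (Fin 7)) then (if U = ({0,4}:Finset (Fin 7)) then 1 else if U = ({2,6}:Finset (Fin 7)) then -1 else 0) else if S = ({1,6}:Finset (Fin 7)) then (if U = ({0,3}:Finset (Fin 7)) then 1 else if U = ({2,5}:Finset (Fin 7)) then 1 else 0) else if S = ({2,3}:Finset (Fin 7)) then (if U = ({0,5}:Finset (Fin 7)) then -1 else if U = ({1,4}:Finset (Fin 7)) then 1 else 0) else if S = ({2,4}:Finset (Fin 7)) then (if U = ({0,6}:Finset (Fin 7)) then 1 else if U = ({1,3}:Finset (Fin 7)) then -1 else 0) else if S = ({2,5}:Finset (Fin 7)) then (if U = ({0,3}:Finset (Fin 7)) then 1 else if U = ({1,6}:Finset (Fin 7)) then 1 else 0) else if S = ({2,6}:Finset (Fin 7)) then (if U = ({0,4}:Finset (Fin 7)) then -1 else if U = ({1,5}:Finset (Fin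 7)) then -1 else 0) else if S = ({3,4}:Finset (Fin 7)) then (if U = ({1,2}:Finset (Fin 7)) then 1 else if U = ({5,6}:Finset (Fin 7)) then 1 else 0) else if S = ({3,5}:Finset (Fin 7)) then (if U = ({0,2}:Finset (Fin 7)) then -1 else if U = ({4,6}:Finset (Fin 7)) then -1 else 0) else if S = ({3,6}:Finset (Fin 7)) then (if U = ({0,1}:Finset (Fin 7)) then -1 else if U = ({4,5}:Finset (Fin 7)) then 1 else 0) else if S = ({4,5}:Finset (Fin 7)) then (if U = ({0,1}:Finset (Fin 7)) then -1 else if U = ({3,6}:Finset (Fin 7)) then 1 else 0) else if S = ({4,6}:Finset (Fin 7)) then (if U = ({0,2}:Finset (Fin 7)) then 1 else if U = ({3,5}:Finset (Fin 7)) then -1 else 0) else if S = ({5,6}:Finset (Fin 7)) then (if U = ({1,2}:Finset (Fin 7)) then 1 else if U = ({3,4}:Finset (Fin 7)) then 1 else 0) else 0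
def toR {n : ℕ} (a : FormZ n) : Form n := fun U => ((a U : ℤ) : ℝ)

lemma msZ : ∀ U : Finset (Fin 7), msignZ Uᶜ U * msignZ U Uᶜ = 1 := by decide
lemma tblDeg : ∀ S U : Finset (Fin 7), U.card ≠ 2 → tbl S U = 0 := by decide
set_option maxHeartbeats 4000000 in
lemma key2 : ∀ S : Finset (Fin 7), S.card = 2 → ∀ U : Finset (Fin 7),
    (∑ R ∈ Finset.univ.filter (fun R : Finset (Fin 7) => R.card = 2), tbl S R * tbl R U)
      = tbl S U + 2 * eSZ S U := by decide
set_option maxHeartbeats 4000000 in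
lemma key1 : ∀ S : Finset (Fin 7), S.card = 2 → ∀ U : Finset (Fin 7), U.card = 2 →
    TZ (eSZ S) U = tbl S U := by decide

-- cast lemmas
lemma cast_msign {n : ℕ} (S T : Finset (Fin n)) : msign S T = ((msignZ S T : ℤ) : ℝ) := by
  simp [msign, msignZ]
lemma cast_eS {n : ℕ} (S : Finset (Fin n)) : eS S = toR (eSZ S) := by
  funext U; simp [eS, eSZ, toR, apply_ite (fun z : ℤ => (z : ℝ))]
lemma cast_phi : phi = toR phiZ := by
  funext U
  simp [phi, phiZ, eS, eSZ, toR, apply_ite (fun z : ℤ => (z : ℝ))]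
lemma cast_wedge {n : ℕ} (a b : FormZ n) : wedge (toR a) (toR b) = toR (wedgeZ a b) := by
  funext U
  simp only [wedge, wedgeZ, toR, Int.cast_sum]
  exact Finset.sum_congr rfl fun S _ => by push_cast [cast_msign]; ring
lemma cast_hstar {n : ℕ} (a : FormZ n) : hstar (toR a) = toR (hstarZ a) := by
  funext U; simp [hstar, hstarZ, toR, cast_msign]

lemma msign_ne_zero {n : ℕ} (S T : Finset (Fin n)) : msign S T ≠ 0 :=
  pow_ne_zero _ (by norm_num)

lemma hstar_hstar7 (a : Form 7) : hstar (hstar a) = a := by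
  funext U
  show msign Uᶜ U * (msign Uᶜᶜ Uᶜ * a Uᶜᶜ) = a U
  rw [compl_compl, cast_msign, cast_msign, ← mul_assoc, ← Int.cast_mul, msZ U]
  simp


def P2 : Finset (Finset (Fin 7)) := Finset.univ.filter (fun S : Finset (Fin 7) => S.card = 2)

def Tl : Form 7 →ₗ[ℝ] Form 7 where
  toFun a := hstar (wedge a phi)
  map_add' a b := by show hstar (wedge (a + b) phi) = _; rw [wedge_add_left, hstar_add]
  map_smul' r a := by show hstar (wedge (r • a) phi) = _; rw [wedge_smul_left, hstar_smul]; rfl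

lemma toR_tbl_deg (S : Finset (Fin 7)) : isDeg 2 (toR (tbl S)) := by
  intro U hU; simp [toR, tblDeg S U hU]

lemma eS_deg {n : ℕ} (S : Finset (Fin n)) : isDeg (S.card) (eS S) := by
  intro U hU; simp only [eS]; rw [if_neg]; rintro rfl; exact hU rfl

lemma wedge_deg {n p q : ℕ} {a b : Form n} (ha : isDeg p a) (hb : isDeg q b) :
    isDeg (p + q) (wedge a b) := by
  intro U hU
  refine Finset.sum_eq_zero fun S hS => ?_
  rw [Finset.mem_powerset] at hS
  by_cases h1 : S.card = p
  · have h2 : (U \ S).card ≠ q := by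
      intro h2
      apply hU
      rw [Finset.card_sdiff_of_subset hS] at h2
      have := Finset.card_le_card hS
      omega
    rw [hb _ h2, mul_zero]
  · rw [ha _ h1, mul_zero, zero_mul]

lemma hstar_deg7 {p : ℕ} (hp : p ≤ 7) {a : Form 7} (ha : isDeg p a) :
    isDeg (7 - p) (hstar a) := by
  intro U hU
  have hcard : Uᶜ.card ≠ p := by
    have h1 : Uᶜ.card = 7 - U.card := by rw [Finset.card_compl]; simp
    have h2 : U.card ≤ 7 := by simpa using Finset.card_le_univ U
    omega
  show msign Uᶜ U * a Uᶜ = 0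
  rw [ha _ hcard, mul_zero]

lemma phi_deg : isDeg 3 phi := by
  intro S hS
  have h : ∀ A : Finset (Fin 7), A.card = 3 → eS A S = 0 := by
    intro A hA; simp only [eS]; rw [if_neg]; rintro rfl; exact hS hA
  simp only [phi, Pi.add_apply, Pi.sub_apply,
    h {0,1,2} (by decide), h {0,3,4} (by decide), h {0,5,6} (by decide), h {1,3,5} (by decide),
    h {1,4,6} (by decide), h {2,3,6} (by decide), h {2,4,5} (by decide)]
  ring

lemma T_eS (S : Finset (Fin 7)) (hS : S.card = 2) : Tl (eS S) = toR (tbl S) := by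
  funext U
  by_cases hU : U.card = 2
  · show hstar (wedge (eS S) phi) U = toR (tbl S) U
    rw [cast_eS, cast_phi, cast_wedge, cast_hstar]
    show ((TZ (eSZ S) U : ℤ) : ℝ) = ((tbl S U : ℤ) : ℝ)
    rw [key1 S hS U hU]
  · have hd : isDeg 2 (hstar (wedge (eS S) phi)) := by
      have hw : isDeg 5 (wedge (eS S) phi) := by
        have := wedge_deg (p := 2) (q := 3) (by simpa [hS] using eS_deg S) phi_deg
        simpa using this
      simpa using hstar_deg7 (by norm_num) hw
    show hstar (wedge (eS S) phi) U = toR (tbl S) U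
    rw [hd U hU]
    simp [toR, tblDeg S U hU]

lemma expand {β : Form 7} (hβ : isDeg 2 β) : β = ∑ S ∈ P2, β S • eS S := by
  funext U
  rw [Finset.sum_apply]
  simp only [Pi.smul_apply, eS, smul_eq_mul, mul_ite, mul_one, mul_zero]
  rw [Finset.sum_ite_eq P2 U β]
  by_cases hU : U.card = 2
  · rw [if_pos (by simp [P2, hU])]
  · rw [if_neg (by simp [P2, hU]), hβ U hU]

lemma T_deg2 {β : Form 7} (hβ : isDeg 2 β) : Tl β = ∑ S ∈ P2, β S • toR (tbl S) := by
  conv_lhs => rw [expand hβ]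
  rw [map_sum]
  refine Finset.sum_congr rfl fun S hS => ?_
  rw [map_smul, T_eS S (by simpa [P2] using hS)]

lemma T_isDeg {β : Form 7} (hβ : isDeg 2 β) : isDeg 2 (Tl β) := by
  rw [T_deg2 hβ]
  intro U hU
  rw [Finset.sum_apply]
  exact Finset.sum_eq_zero fun S _ => by simp [toR, tblDeg S U hU]

lemma T_tbl {S : Finset (Fin 7)} (hS : S.card = 2) :
    Tl (toR (tbl S)) = toR (tbl S) + (2:ℝ) • eS S := by
  rw [T_deg2 (toR_tbl_deg S)]
  funext U
  simp only [Finset.sum_apply, Pi.smul_apply, Pi.add_apply, smul_eq_mul]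
  have h1 : ∑ R ∈ P2, toR (tbl S) R * toR (tbl R) U
      = ((∑ R ∈ P2, tbl S R * tbl R U : ℤ) : ℝ) := by
    push_cast; rfl
  rw [h1, show (∑ R ∈ P2, tbl S R * tbl R U) = tbl S U + 2 * eSZ S U from key2 S hS U]
  rw [cast_eS]
  show ((tbl S U + 2 * eSZ S U : ℤ) : ℝ) = toR (tbl S) U + 2 * toR (eSZ S) U
  push_cast [toR]
  ring

lemma Tsq {β : Form 7} (hβ : isDeg 2 β) : Tl (Tl β) = Tl β + (2:ℝ) • β := by
  conv_lhs => rw [T_deg2 hβ]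
  rw [map_sum]
  rw [Finset.sum_congr rfl (fun S hS => by
    rw [map_smul, T_tbl (by simpa [P2] using hS), smul_add])]
  rw [Finset.sum_add_distrib]
  congr 1
  · rw [← T_deg2 hβ]
  · have h : ∑ S ∈ P2, β S • ((2:ℝ) • eS S) = (2:ℝ) • ∑ S ∈ P2, β S • eS S := by
      rw [Finset.smul_sum]
      exact Finset.sum_congr rfl fun S _ => (smul_comm _ _ _).symm
    rw [h, ← expand hβ]

lemma hstar_neg {n : ℕ} (a : Form n) : hstar (-a) = -hstar a := by
  funext U; simp [hstar]


/-- `Λ²(V*) = Λ²₇ ⊕ Λ²₁₄` as vector spaces. -/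
theorem stmt3 : L27 ⊓ L214 = ⊥ ∧ L27 ⊔ L214 = degSub 7 2 := by
  constructor
  · rw [eq_bot_iff]
    rintro β hβ
    rw [Submodule.mem_inf] at hβ
    obtain ⟨⟨-, h7⟩, ⟨-, h14⟩⟩ := hβ
    have h : (2:ℝ) • hstar β = -hstar β := by rw [← h7, h14]
    rw [Submodule.mem_bot]
    funext U
    have hU := congrFun h Uᶜ
    simp only [Pi.smul_apply, Pi.neg_apply, smul_eq_mul] at hU
    have h0 : hstar β Uᶜ = 0 := by linarith
    have h1 : msign Uᶜᶜ Uᶜ * β Uᶜᶜ = 0 := h0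
    rw [compl_compl] at h1
    have h2 := (mul_eq_zero.mp h1).resolve_left (msign_ne_zero _ _)
    simpa using h2
  · apply le_antisymm
    · apply sup_le
      · rintro β ⟨h1, -⟩; exact h1
      · rintro β ⟨h1, -⟩; exact h1
    · intro β hβ
      have hβ2 : isDeg 2 β := hβ
      have hT : isDeg 2 (Tl β) := T_isDeg hβ2
      set γ : Form 7 := (3:ℝ)⁻¹ • (β + Tl β) with hγdef
      set δ : Form 7 := (3:ℝ)⁻¹ • ((2:ℝ) • β - Tl β) with hδdef
      have hsum : β = γ + δ := by
        funext U
        simp only [hγdef, hδdef, Pi.smul_apply, Pi.add_apply, Pi.sub_apply, smul_eq_mul]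
        ring
      have hγdeg : isDeg 2 γ := fun U hU => by
        simp only [hγdef, Pi.smul_apply, Pi.add_apply, hβ2 U hU, hT U hU, smul_eq_mul]; ring
      have hδdeg : isDeg 2 δ := fun U hU => by
        simp only [hδdef, Pi.smul_apply, Pi.sub_apply, smul_eq_mul, hβ2 U hU, hT U hU]; ring
      have hTγ : Tl γ = (2:ℝ) • γ := by
        rw [hγdef, map_smul, map_add, Tsq hβ2]
        funext U
        simp only [Pi.smul_apply, Pi.add_apply, smul_eq_mul]; ring
      have hTδ : Tl δ = -δ := by
        rw [hδdef, map_smul, map_sub, map_smul, Tsq hβ2]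
        funext U
        simp only [Pi.smul_apply, Pi.sub_apply, Pi.neg_apply, Pi.add_apply, smul_eq_mul]; ring
      have hγm : γ ∈ L27 := by
        refine ⟨hγdeg, ?_⟩
        have e : hstar (Tl γ) = wedge γ phi := hstar_hstar7 (wedge γ phi)
        rw [← e, hTγ, hstar_smul]
      have hδm : δ ∈ L214 := by
        refine ⟨hδdeg, ?_⟩
        have e : hstar (Tl δ) = wedge δ phi := hstar_hstar7 (wedge δ phi)
        rw [← e, hTδ, hstar_neg]
      rw [hsum]
      exact Submodule.add_mem_sup hγm hδm


end CK
end

section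
/- Let V₊ = ℝ⁸ with the standard Spin(7) 4-form ψ₀. Let τ = −24(e⁰²³ + e⁰⁴⁵ + e⁰⁶⁷) + 12(e²⁴⁷ − e³⁵⁷ + e²⁵⁶ + e³⁴⁶). Then τ ∧ ψ₀ = −24·e⁰²³⁴⁵⁶⁷, and in particular τ∧ψ₀ ≠ 0 and there is no vector X ∈ ℝ⁸ with τ = i_Xψ₀. Consequently, the projections of τ onto both summands of the decomposition Λ³((ℝ⁸)*) = Λ³₈ ⊕ Λ³₄₈ are nonzero, where Λ³₈ = {i_Xψ₀ : X ∈ ℝ⁸} and Λ³₄₈ = {β ∈ Λ³ : β ∧ ψ₀ = 0}. -/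
namespace CK

/-- `τ = −24(e⁰²³ + e⁰⁴⁵ + e⁰⁶⁷) + 12(e²⁴⁷ − e³⁵⁷ + e²⁵⁶ + e³⁴⁶)`. -/
def tau0 : Form 8 :=
  (-24 : ℝ) • (eS {0,2,3} + eS {0,4,5} + eS {0,6,7})
    + (12 : ℝ) • (eS {2,4,7} - eS {3,5,7} + eS {2,5,6} + eS {3,4,6})

lemma wedge_eS_eS {n : ℕ} (S T : Finset (Fin n)) :
    wedge (eS S) (eS T) =
      if Disjoint S T then msign S T • eS (S ∪ T) else 0 := by
  funext U
  by_cases hSU : S ⊆ U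
  · rw [wedge, Finset.sum_eq_single S]
    · rw [eS, if_pos rfl, mul_one]
      by_cases hT : U \ S = T
      · have hd : Disjoint S T := hT ▸ Finset.disjoint_sdiff
        have hUn : S ∪ T = U := by rw [← hT]; exact Finset.union_sdiff_of_subset hSU
        rw [if_pos hd, eS, if_pos hT, Pi.smul_apply, eS, if_pos hUn.symm, hT]
        simp
      · rw [eS, if_neg hT, mul_zero]
        split_ifs with hd
        · rw [Pi.smul_apply, eS, if_neg, smul_zero]
          intro h
          exact hT (by rw [h, Finset.union_sdiff_cancel_left hd])
        · rfl
    · intro A hA hAS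
      rw [eS, if_neg hAS, mul_zero, zero_mul]
    · intro h
      exact absurd (Finset.mem_powerset.mpr hSU) h
  · rw [wedge]
    have h0 : ∀ A ∈ U.powerset, msign A (U \ A) * eS S A * eS T (U \ A) = 0 := by
      intro A hA
      have : A ≠ S := fun h => hSU (h ▸ Finset.mem_powerset.mp hA)
      rw [eS, if_neg this, mul_zero, zero_mul]
    rw [Finset.sum_congr rfl h0, Finset.sum_const_zero]
    split_ifs with hd
    · rw [Pi.smul_apply, eS, if_neg, smul_zero]
      intro h; exact hSU (h ▸ Finset.subset_union_left)
    · rfl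

set_option maxHeartbeats 1000000
lemma wedge_sub_left {n : ℕ} (a b c : Form n) :
    wedge (a - b) c = wedge a c - wedge b c := by
  funext U
  simp only [wedge, Pi.sub_apply, ← Finset.sum_sub_distrib]
  exact Finset.sum_congr rfl fun S _ => by ring

lemma wedge_sub_right {n : ℕ} (a b c : Form n) :
    wedge a (b - c) = wedge a b - wedge a c := by
  funext U
  simp only [wedge, Pi.sub_apply, ← Finset.sum_sub_distrib]
  exact Finset.sum_congr rfl fun S _ => by ring

lemma wedge_eS_disj {n : ℕ} {S T : Finset (Fin n)} (h : Disjoint S T) :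
    wedge (eS S) (eS T) = msign S T • eS (S ∪ T) := by
  rw [wedge_eS_eS, if_pos h]

lemma wedge_eS_ndisj {n : ℕ} {S T : Finset (Fin n)} (h : ¬ Disjoint S T) :
    wedge (eS S) (eS T) = 0 := by
  rw [wedge_eS_eS, if_neg h]

lemma part1 : wedge tau0 psi = (-24 : ℝ) • eS {0,2,3,4,5,6,7} := by
  have m1 : msign ({0,2,3} : Finset (Fin 8)) {4,5,6,7} = 1 := by
    rw [msign, show ((({0,2,3} : Finset (Fin 8)) ×ˢ ({4,5,6,7} : Finset (Fin 8))).filter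
      fun p => p.2 < p.1).card = 0 from by decide]; norm_num
  have m2 : msign ({0,4,5} : Finset (Fin 8)) {2,3,6,7} = 1 := by
    rw [msign, show ((({0,4,5} : Finset (Fin 8)) ×ˢ ({2,3,6,7} : Finset (Fin 8))).filter
      fun p => p.2 < p.1).card = 4 from by decide]; norm_num
  have m3 : msign ({0,6,7} : Finset (Fin 8)) {2,3,4,5} = 1 := by
    rw [msign, show ((({0,6,7} : Finset (Fin 8)) ×ˢ ({2,3,4,5} : Finset (Fin 8))).filter
      fun p => p.2 < p.1).card = 8 from by decide]; norm_num
  have m4 : msign ({2,4,7} : Finset (Fin 8)) {0,3,5,6} = -1 := by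
    rw [msign, show ((({2,4,7} : Finset (Fin 8)) ×ˢ ({0,3,5,6} : Finset (Fin 8))).filter
      fun p => p.2 < p.1).card = 7 from by decide]; norm_num
  have m5 : msign ({3,5,7} : Finset (Fin 8)) {0,2,4,6} = -1 := by
    rw [msign, show ((({3,5,7} : Finset (Fin 8)) ×ˢ ({0,2,4,6} : Finset (Fin 8))).filter
      fun p => p.2 < p.1).card = 9 from by decide]; norm_num
  have m6 : msign ({2,5,6} : Finset (Fin 8)) {0,3,4,7} = -1 := by
    rw [msign, show ((({2,5,6} : Finset (Fin 8)) ×ˢ ({0,3,4,7} : Finset (Fin 8))).filter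
      fun p => p.2 < p.1).card = 7 from by decide]; norm_num
  have m7 : msign ({3,4,6} : Finset (Fin 8)) {0,2,5,7} = -1 := by
    rw [msign, show ((({3,4,6} : Finset (Fin 8)) ×ˢ ({0,2,5,7} : Finset (Fin 8))).filter
      fun p => p.2 < p.1).card = 7 from by decide]; norm_num
  rw [tau0, psi]
  simp only [wedge_add_left, wedge_sub_left, wedge_add_right, wedge_sub_right,
    wedge_smul_left, wedge_smul_right]
  have key : ∀ (S T : Finset (Fin 8)) (W : Finset (Fin 8)) (r : ℝ), Disjoint S T →
      msign S T = r → S ∪ T = W → wedge (eS S) (eS T) = r • eS W := by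
    rintro S T W r h hm rfl
    rw [wedge_eS_disj h, hm]
  have w1 : wedge (eS {0,2,3}) (eS ({4,5,6,7} : Finset (Fin 8))) = (1:ℝ) • eS {0,2,3,4,5,6,7} :=
    key _ _ _ _ (by decide) m1 (by decide)
  have w2 : wedge (eS {0,4,5}) (eS ({2,3,6,7} : Finset (Fin 8))) = (1:ℝ) • eS {0,2,3,4,5,6,7} :=
    key _ _ _ _ (by decide) m2 (by decide)
  have w3 : wedge (eS {0,6,7}) (eS ({2,3,4,5} : Finset (Fin 8))) = (1:ℝ) • eS {0,2,3,4,5,6,7} :=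
    key _ _ _ _ (by decide) m3 (by decide)
  have w4 : wedge (eS {2,4,7}) (eS ({0,3,5,6} : Finset (Fin 8))) = (-1:ℝ) • eS {0,2,3,4,5,6,7} :=
    key _ _ _ _ (by decide) m4 (by decide)
  have w5 : wedge (eS {3,5,7}) (eS ({0,2,4,6} : Finset (Fin 8))) = (-1:ℝ) • eS {0,2,3,4,5,6,7} :=
    key _ _ _ _ (by decide) m5 (by decide)
  have w6 : wedge (eS {2,5,6}) (eS ({0,3,4,7} : Finset (Fin 8))) = (-1:ℝ) • eS {0,2,3,4,5,6,7} :=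
    key _ _ _ _ (by decide) m6 (by decide)
  have w7 : wedge (eS {3,4,6}) (eS ({0,2,5,7} : Finset (Fin 8))) = (-1:ℝ) • eS {0,2,3,4,5,6,7} :=
    key _ _ _ _ (by decide) m7 (by decide)
  simp only [w1, w2, w3, w4, w5, w6, w7]
  simp (disch := decide) only [wedge_eS_ndisj]
  funext U
  simp only [Pi.add_apply, Pi.sub_apply, Pi.smul_apply, Pi.zero_apply, Pi.neg_apply, smul_eq_mul]
  ring
lemma iVec_023 (X : Fin 8 → ℝ) : iVec X psi {0,2,3} = - X 1 := by
  simp (config := { decide := true }) [iVec, contr, psi, eS, Finset.sum_apply, Pi.smul_apply,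
    Fin.sum_univ_eight]

lemma iVec_247 (X : Fin 8 → ℝ) : iVec X psi {2,4,7} = - X 1 := by
  simp (config := { decide := true }) [iVec, contr, psi, eS, Finset.sum_apply, Pi.smul_apply,
    Fin.sum_univ_eight]

lemma tau_023 : tau0 {0,2,3} = -24 := by
  simp (config := { decide := true }) [tau0, eS]

lemma tau_247 : tau0 {2,4,7} = 12 := by
  simp (config := { decide := true }) [tau0, eS]

lemma part3 : ¬ ∃ X : Fin 8 → ℝ, tau0 = iVec X psi := by
  rintro ⟨X, hX⟩
  have h1 : tau0 {0,2,3} = iVec X psi {0,2,3} := by rw [hX]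
  have h2 : tau0 {2,4,7} = iVec X psi {2,4,7} := by rw [hX]
  rw [tau_023, iVec_023] at h1
  rw [tau_247, iVec_247] at h2
  linarith


/-- `τ∧ψ₀ = −24 e⁰²³⁴⁵⁶⁷ ≠ 0`, `τ` is not of the form `i_Xψ₀`, and
both components of `τ` in `Λ³ = Λ³₈ ⊕ Λ³₄₈` (with `Λ³₈ = {i_Xψ₀}`, `Λ³₄₈ = {β : β∧ψ₀ = 0}`)
are nonzero. -/
theorem stmt17 :
    wedge tau0 psi = (-24 : ℝ) • eS {0,2,3,4,5,6,7} ∧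
    wedge tau0 psi ≠ 0 ∧
    (¬ ∃ X : Fin 8 → ℝ, tau0 = iVec X psi) ∧
    (∀ b8 b48 : Form 8, (∃ X : Fin 8 → ℝ, b8 = iVec X psi) →
      isDeg 3 b48 → wedge b48 psi = 0 → tau0 = b8 + b48 → b8 ≠ 0 ∧ b48 ≠ 0) := by
  have hne : wedge tau0 psi ≠ 0 := by
    rw [part1]
    intro h
    have := congrFun h {0,2,3,4,5,6,7}
    simp [eS] at this
  refine ⟨part1, hne, part3, ?_⟩
  rintro b8 b48 ⟨X, rfl⟩ hdeg hw hsum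
  constructor
  · intro h0
    rw [h0, zero_add] at hsum
    exact hne (hsum ▸ hw)
  · intro h0
    rw [h0, add_zero] at hsum
    exact part3 ⟨X, hsum⟩

end CK
end
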